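/- In a decreasing maximal chain of Π_{n,s+1} with respect to the labeling λ, if x ⋖ y is an edge with λ(x ⋖ y) = (k,i,j) and k ≤ n−1, then the underlying partition of y has the form {1}{2}...{k−1} I_k ... I_m where I_k is the (non-singleton) part containing k, i.e., every element of [k−1] forms a singleton part of y. -/

import Mathlib

open Finset

/-- A vector partition of `[n]` into `s+1` components: a partition `P` of `[n]`
together with `s` labelings of its parts. -/
structure VPart (n s : ℕ) where
  P : Finpartition (Finset.univ : Finset (Fin n))
  w : Fin s → Finset (Fin n) → Finset (Fin n)
  card_w : ∀ i : Fin s, ∀ B ∈ P.parts, (w i B).card = B.card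
  part_w : ∀ i : Fin s, ∀ x : Fin n, ∃! B, B ∈ P.parts ∧ x ∈ w i B
  w_junk : ∀ i B, B ∉ P.parts → w i B = ∅

namespace VPart

variable {n s : ℕ}

@[ext] theorem ext' {x y : VPart n s} (hP : x.P = y.P) (hw : x.w = y.w) : x = y := by
  cases x; cases y; simp_all

/-- componentwise union-refinement order -/
instance : PartialOrder (VPart n s) where
  le x y := x.P ≤ y.P ∧
    ∀ i : Fin s, ∀ B ∈ x.P.parts, ∀ B' ∈ y.P.parts, B ⊆ B' → x.w i B ⊆ y.w i B'
  le_refl x := by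
    refine ⟨le_refl _, fun i B hB B' hB' hBB' => ?_⟩
    obtain rfl : B = B' := by
      obtain ⟨a, ha⟩ := x.P.nonempty_of_mem_parts hB
      exact x.P.eq_of_mem_parts hB hB' ha (hBB' ha)
    exact subset_rfl
  le_trans x y z hxy hyz := by
    refine ⟨le_trans hxy.1 hyz.1, fun i B hB B'' hB'' hBB'' => ?_⟩
    obtain ⟨B', hB', hBB'⟩ := hxy.1 hB
    obtain ⟨B''', hB''', hB'B'''⟩ := hyz.1 hB'
    obtain ⟨a, ha⟩ := x.P.nonempty_of_mem_parts hB
    obtain rfl : B''' = B'' :=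
      z.P.eq_of_mem_parts hB''' hB'' (hB'B''' (hBB' ha)) (hBB'' ha)
    exact subset_trans (hxy.2 i B hB B' hB' hBB') (hyz.2 i B' hB' B''' hB''' hB'B''')
  le_antisymm x y hxy hyx := by
    have hP : x.P = y.P := le_antisymm hxy.1 hyx.1
    refine ext' hP ?_
    funext i B
    by_cases hB : B ∈ x.P.parts
    · exact subset_antisymm (hxy.2 i B hB B (hP ▸ hB) subset_rfl)
        (hyx.2 i B (hP ▸ hB) B hB subset_rfl)
    · rw [x.w_junk i B hB, y.w_junk i B (hP ▸ hB)]

/-- the part of the underlying partition containing `k` -/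
def partOf (x : VPart n s) (k : Fin n) : Finset (Fin n) := x.P.part k

/-- the atom word of `x`: `atomWord x i k` is the element of the `i`-th label of the
part containing `k` whose rank in that label matches the rank of `k` in its part. -/
def atomWord (x : VPart n s) (i : Fin s) (k : Fin n) : Fin n :=
  (((x.w i (x.partOf k)).sort (· ≤ ·)).getD (((x.partOf k).filter (· < k)).card)) k

/-- `x` is an atom: all parts of the underlying partition are singletons. -/
def IsAtomic (x : VPart n s) : Prop := ∀ B ∈ x.P.parts, B.card = 1

/-- strict lexicographic order on atom words, with `i` as the major index
and `k` the minor index. -/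
def wordLt (A B : Fin s → Fin n → Fin n) : Prop :=
  ∃ i k, A i k < B i k ∧
    ∀ i' k', (i' < i ∨ (i' = i ∧ k' < k)) → A i' k' = B i' k'

def wordLe (A B : Fin s → Fin n → Fin n) : Prop := wordLt A B ∨ A = B

end VPart

/-- labels: `ℤ × ℤ × ℤ` with the lexicographic order -/
abbrev Lbl : Type := ℤ ×ₗ ℤ ×ₗ ℤ

def mkLbl (a b c : ℤ) : Lbl := toLex (a, toLex (b, c))

namespace VPart

variable {n s : ℕ}

set_option maxHeartbeats 1000000 in
open scoped Classical in
/-- the `(k,i,j)` label for an edge with distinct atom words (1-based) -/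
noncomputable def firstDiff (x y : VPart n s) : Lbl :=
  let D : Finset (Fin n × Fin s) :=
    Finset.univ.filter fun p => atomWord x p.2 p.1 ≠ atomWord y p.2 p.1
  if h : D.Nonempty then
    have hk : (D.image Prod.fst).Nonempty := h.image _
    let k := (D.image Prod.fst).min' hk
    have hk2 : ((D.filter fun p => p.1 = k).image Prod.snd).Nonempty := by
      obtain ⟨p, hp, hpk⟩ := Finset.mem_image.mp ((D.image Prod.fst).min'_mem hk)
      exact ⟨p.2, Finset.mem_image.mpr ⟨p, Finset.mem_filter.mpr ⟨hp, hpk⟩, rfl⟩⟩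
    let i := ((D.filter fun p => p.1 = k).image Prod.snd).min' hk2
    mkLbl ((k : ℕ) + 1) ((i : ℕ) + 1) ((atomWord y i k : ℕ) + 1)
  else mkLbl 0 0 0

/-- the maximum (1-based) of the union of the two merged parts -/
noncomputable def mergeMax (x y : VPart n s) : ℤ :=
  ((y.P.parts \ x.P.parts).sup fun B => B.sup fun t => (t : ℕ) + 1 : ℕ)

/-- the (1-based) index of an atom in the lexicographic order on atoms -/
noncomputable def atomIndex (a : VPart n s) : ℤ :=
  (Nat.card {a' : VPart n s // a'.IsAtomic ∧ wordLe (atomWord a') (atomWord a)} : ℤ)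

/-- The edge labeling `λ` of `Π_{n,s+1}` (on arbitrary pairs; only its values on
covering pairs are relevant). -/
noncomputable def lam : WithBot (VPart n s) → WithBot (VPart n s) → Lbl
  | ⊥, (y : VPart n s) => mkLbl ((n : ℤ) - 1) (s + atomIndex y) 0
  | (x : VPart n s), (y : VPart n s) =>
      if atomWord x = atomWord y then mkLbl n (mergeMax x y) 0 else firstDiff x y
  | _, _ => mkLbl 0 0 0

end VPart

/-!
Every label of a decreasing chain is at most the label `(n - 1, _, _)` of its first edge, so no
edge of the chain keeps the atom word, and the label of an edge `x ⋖ y` is `(K + 1, _, _)` where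
`K` is the first position at which the atom words of `x` and `y` differ; along the chain below
`y` these first positions are at least `K`. A cover merges two parts. If it merged a singleton
`{m}`, `m < K`, into a part `B`, the atom word would be unchanged at `m`, so the order-preserving
matching of `B ∪ {m}` with its labels would send `m` to the label of `{m}` and restrict to the
matching of `B`: the atom word would not change at all. Hence every `m < K` stays a singleton.
If `K` were a singleton of `y`, the atom words of `x` and `y` would agree at `K`.
-/

section RankMatch

variable {α β : Type*} [LinearOrder α] [LinearOrder β]

/-- For `#W = #B`, `rankMatch B W` is on `B` the order isomorphism `B ≃o W`. -/
def rankMatch (B W : Finset α) (x : α) : α := (W.sort (· ≤ ·)).getD #{y ∈ B | y < x} x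

lemma card_filter_lt_lt_card {B : Finset α} {x : α} (hx : x ∈ B) : #{y ∈ B | y < x} < #B :=
  card_lt_card (filter_ssubset.mpr ⟨x, hx, lt_irrefl x⟩)

lemma strictMonoOn_card_filter_lt (B : Finset α) :
    StrictMonoOn (fun x => #{y ∈ B | y < x}) B := by
  intro x hx x' _ hlt
  refine card_lt_card ((ssubset_iff_of_subset ?_).mpr ⟨x, ?_, ?_⟩)
  · exact monotone_filter_right B fun _ _ hy => hy.trans hlt
  · exact mem_filter.mpr ⟨hx, hlt⟩
  · simp

lemma rankMatch_eq_orderEmbOfFin {B W : Finset α} (h : #W = #B) {x : α} (hx : x ∈ B) :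
    rankMatch B W x = W.orderEmbOfFin h ⟨#{y ∈ B | y < x}, card_filter_lt_lt_card hx⟩ := by
  rw [orderEmbOfFin_apply]
  exact List.getD_eq_getElem ..

lemma strictMonoOn_rankMatch {B W : Finset α} (h : #W = #B) : StrictMonoOn (rankMatch B W) B := by
  intro x hx x' hx' hlt
  rw [rankMatch_eq_orderEmbOfFin h hx, rankMatch_eq_orderEmbOfFin h hx']
  exact (W.orderEmbOfFin h).strictMono (strictMonoOn_card_filter_lt B hx hx' hlt)

lemma rankMatch_mem {B W : Finset α} (h : #W = #B) {x : α} (hx : x ∈ B) :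
    rankMatch B W x ∈ W := by
  rw [rankMatch_eq_orderEmbOfFin h hx]
  exact orderEmbOfFin_mem ..

lemma eqOn_of_strictMonoOn_of_mapsTo {B : Finset α} {W : Finset β} (h : #W = #B) {g g' : α → β}
    (hg : StrictMonoOn g B) (hgW : Set.MapsTo g B W)
    (hg' : StrictMonoOn g' B) (hg'W : Set.MapsTo g' B W) : Set.EqOn g g' B := by
  let f := B.orderEmbOfFin rfl
  have hf : ∀ i, f i ∈ B := orderEmbOfFin_mem B rfl
  have hgf : g ∘ f = W.orderEmbOfFin h := orderEmbOfFin_unique h (fun i => hgW (hf i))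
    fun _ _ hij => hg (hf _) (hf _) (f.strictMono hij)
  have hg'f : g' ∘ f = W.orderEmbOfFin h := orderEmbOfFin_unique h (fun i => hg'W (hf i))
    fun _ _ hij => hg' (hf _) (hf _) (f.strictMono hij)
  intro x hx
  obtain ⟨i, rfl⟩ : x ∈ Set.range f := by rwa [range_orderEmbOfFin]
  exact congrFun (hgf.trans hg'f.symm) i

lemma eqOn_rankMatch_insert {B W : Finset α} {m a : α} (hm : m ∉ B) (ha : a ∉ W) (h : #W = #B)
    (hma : rankMatch (insert m B) (insert a W) m = a) :
    Set.EqOn (rankMatch (insert m B) (insert a W)) (rankMatch B W) B := by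
  have h' : #(insert a W) = #(insert m B) := by
    rw [card_insert_of_notMem ha, card_insert_of_notMem hm, h]
  have hmono := strictMonoOn_rankMatch h'
  refine eqOn_of_strictMonoOn_of_mapsTo h (hmono.mono (by simp)) (fun x hx => ?_)
    (strictMonoOn_rankMatch h) (fun x hx => rankMatch_mem h hx)
  have hxm : x ≠ m := fun hxm => hm (hxm ▸ hx)
  have hne : rankMatch (insert m B) (insert a W) x ≠ a := fun hxa =>
    hxm (hmono.injOn (by simp [hx]) (by simp) (hxa.trans hma.symm))
  exact (mem_insert.mp (rankMatch_mem h' (mem_insert_of_mem hx))).resolve_left hne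

end RankMatch

namespace Finpartition

variable {α : Type*} [DecidableEq α] {S : Finset α} (P : Finpartition S) {B₁ B₂ : Finset α}

lemma union_notMem_parts (h₁ : B₁ ∈ P.parts) (h₂ : B₂ ∈ P.parts) (hne : B₁ ≠ B₂) :
    B₁ ∪ B₂ ∉ P.parts := by
  intro h
  have hsub : ∀ {B}, B ∈ P.parts → B ⊆ B₁ ∪ B₂ → B = B₁ ∪ B₂ := fun hB hsub =>
    let ⟨a, ha⟩ := P.nonempty_of_mem_parts hB
    P.eq_of_mem_parts hB h ha (hsub ha)
  exact hne ((hsub h₁ subset_union_left).trans (hsub h₂ subset_union_right).symm)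

lemma eq_of_subset_of_mem_parts {B B' : Finset α} (hB : B ∈ P.parts) (hB' : B' ∈ P.parts)
    (hBB' : B ⊆ B') : B = B' :=
  let ⟨_, ha⟩ := P.nonempty_of_mem_parts hB
  P.eq_of_mem_parts hB hB' ha (hBB' ha)

def mergeParts (h₁ : B₁ ∈ P.parts) (h₂ : B₂ ∈ P.parts) : Finpartition S :=
  ofExistsUnique (insert (B₁ ∪ B₂) {C ∈ P.parts | C ≠ B₁ ∧ C ≠ B₂})
    (by
      simp only [mem_insert, mem_filter]
      rintro C (rfl | ⟨hC, -⟩)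
      exacts [union_subset (P.subset h₁) (P.subset h₂), P.subset hC])
    (fun a ha => by
      by_cases hB : a ∈ B₁ ∪ B₂
      · refine ⟨B₁ ∪ B₂, ⟨mem_insert_self _ _, hB⟩, ?_⟩
        simp only [mem_insert, mem_filter]
        rintro C ⟨rfl | ⟨hC, hC₁, hC₂⟩, haC⟩
        · rfl
        · rcases mem_union.mp hB with h | h
          exacts [absurd (P.eq_of_mem_parts hC h₁ haC h) hC₁,
            absurd (P.eq_of_mem_parts hC h₂ haC h) hC₂]
      · have hpart : P.part a ∈ P.parts := P.part_mem.mpr ha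
        have hmem : a ∈ P.part a := P.mem_part ha
        refine ⟨P.part a, ⟨mem_insert_of_mem (mem_filter.mpr ⟨hpart, ?_, ?_⟩), hmem⟩, ?_⟩
        · rintro rfl; exact hB (mem_union_left _ hmem)
        · rintro rfl; exact hB (mem_union_right _ hmem)
        simp only [mem_insert, mem_filter]
        rintro C ⟨rfl | ⟨hC, -⟩, haC⟩
        exacts [absurd haC hB, (P.part_eq_of_mem hC haC).symm])
    (by
      simp only [mem_insert, mem_filter, not_or]
      refine ⟨fun h => ?_, fun h => P.empty_notMem_parts h.1⟩
      obtain ⟨a, ha⟩ := P.nonempty_of_mem_parts h₁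
      simpa [← h] using mem_union_left B₂ ha)

variable {P}

lemma mem_mergeParts (h₁ : B₁ ∈ P.parts) (h₂ : B₂ ∈ P.parts) {C : Finset α} :
    C ∈ (P.mergeParts h₁ h₂).parts ↔ C = B₁ ∪ B₂ ∨ C ∈ P.parts ∧ C ≠ B₁ ∧ C ≠ B₂ := by
  simp [mergeParts]

lemma part_mergeParts_of_mem (h₁ : B₁ ∈ P.parts) (h₂ : B₂ ∈ P.parts) {a : α}
    (ha : a ∈ B₁ ∪ B₂) : (P.mergeParts h₁ h₂).part a = B₁ ∪ B₂ :=
  part_eq_of_mem _ ((mem_mergeParts h₁ h₂).mpr (Or.inl rfl)) ha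

lemma part_mergeParts_of_notMem (h₁ : B₁ ∈ P.parts) (h₂ : B₂ ∈ P.parts) {a : α} (ha : a ∈ S)
    (ha' : a ∉ B₁ ∪ B₂) : (P.mergeParts h₁ h₂).part a = P.part a := by
  have hmem : a ∈ P.part a := P.mem_part ha
  refine part_eq_of_mem _ ((mem_mergeParts h₁ h₂).mpr (Or.inr ⟨P.part_mem.mpr ha, ?_, ?_⟩)) hmem
  · rintro h; exact ha' (mem_union_left _ (h ▸ hmem))
  · rintro h; exact ha' (mem_union_right _ (h ▸ hmem))

lemma le_mergeParts (h₁ : B₁ ∈ P.parts) (h₂ : B₂ ∈ P.parts) : P ≤ P.mergeParts h₁ h₂ := by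
  intro B hB
  by_cases hB₁₂ : B = B₁ ∨ B = B₂
  · refine ⟨B₁ ∪ B₂, (mem_mergeParts h₁ h₂).mpr (Or.inl rfl), ?_⟩
    rcases hB₁₂ with rfl | rfl
    exacts [subset_union_left, subset_union_right]
  · push Not at hB₁₂
    exact ⟨B, (mem_mergeParts h₁ h₂).mpr (Or.inr ⟨hB, hB₁₂⟩), subset_rfl⟩

end Finpartition

lemma mkLbl_inj {a b c a' b' c' : ℤ} :
    mkLbl a b c = mkLbl a' b' c' ↔ a = a' ∧ b = b' ∧ c = c' := by
  simp [mkLbl]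

lemma le_of_mkLbl_le {a b c a' b' c' : ℤ} (h : mkLbl a b c ≤ mkLbl a' b' c') : a ≤ a' :=
  (Prod.Lex.toLex_le_toLex.mp h).elim le_of_lt fun h => h.1.le

namespace VPart

variable {n s : ℕ} {X Y : VPart n s} {B₁ B₂ : Finset (Fin n)}

lemma atomWord_eq_rankMatch (x : VPart n s) (i : Fin s) (k : Fin n) :
    x.atomWord i k = rankMatch (x.partOf k) (x.w i (x.partOf k)) k := rfl

lemma partOf_mem (x : VPart n s) (k : Fin n) : x.partOf k ∈ x.P.parts :=
  x.P.part_mem.mpr (mem_univ k)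

lemma mem_partOf (x : VPart n s) (k : Fin n) : k ∈ x.partOf k :=
  x.P.mem_part (mem_univ k)

lemma partOf_eq_of_mem (x : VPart n s) {B : Finset (Fin n)} (hB : B ∈ x.P.parts) {k : Fin n}
    (hk : k ∈ B) : x.partOf k = B :=
  x.P.part_eq_of_mem hB hk

lemma card_w_partOf (x : VPart n s) (i : Fin s) (k : Fin n) :
    #(x.w i (x.partOf k)) = #(x.partOf k) :=
  x.card_w i _ (x.partOf_mem k)

lemma atomWord_mem (x : VPart n s) (i : Fin s) (k : Fin n) :
    x.atomWord i k ∈ x.w i (x.partOf k) :=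
  rankMatch_mem (x.card_w_partOf i k) (x.mem_partOf k)

lemma eq_of_mem_w (x : VPart n s) {i : Fin s} {B B' : Finset (Fin n)} (hB : B ∈ x.P.parts)
    (hB' : B' ∈ x.P.parts) {a : Fin n} (ha : a ∈ x.w i B) (ha' : a ∈ x.w i B') : B = B' :=
  (x.part_w i a).unique ⟨hB, ha⟩ ⟨hB', ha'⟩

lemma atomWord_injective (x : VPart n s) (i : Fin s) : Function.Injective (x.atomWord i) := by
  intro t t' h
  have hpart : x.partOf t = x.partOf t' :=
    x.eq_of_mem_w (x.partOf_mem t) (x.partOf_mem t') (x.atomWord_mem i t) (h ▸ x.atomWord_mem i t')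
  have ht : t ∈ x.partOf t' := hpart ▸ x.mem_partOf t
  rw [atomWord_eq_rankMatch, atomWord_eq_rankMatch, hpart] at h
  exact (strictMonoOn_rankMatch (x.card_w_partOf i t')).injOn ht (x.mem_partOf t') h

lemma partOf_subset_of_le {x y : VPart n s} (h : x ≤ y) (k : Fin n) : x.partOf k ⊆ y.partOf k := by
  obtain ⟨C, hC, hsub⟩ := h.1 (x.partOf_mem k)
  rw [y.partOf_eq_of_mem hC (hsub (x.mem_partOf k))]
  exact hsub

lemma w_partOf_subset_of_le {x y : VPart n s} (h : x ≤ y) (i : Fin s) (k : Fin n) :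
    x.w i (x.partOf k) ⊆ y.w i (y.partOf k) :=
  h.2 i _ (x.partOf_mem k) _ (y.partOf_mem k) (partOf_subset_of_le h k)

lemma atomWord_eq_of_le_of_partOf_eq_singleton {x y : VPart n s} (h : x ≤ y) {k : Fin n}
    (hk : y.partOf k = {k}) (i : Fin s) : x.atomWord i k = y.atomWord i k := by
  have hx : x.partOf k = {k} :=
    eq_singleton_iff_unique_mem.mpr ⟨x.mem_partOf k, fun t ht => mem_singleton.mp
      (hk ▸ partOf_subset_of_le h k ht)⟩
  have hw : x.w i (x.partOf k) = y.w i (y.partOf k) :=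
    eq_of_subset_of_card_le (w_partOf_subset_of_le h i k)
      (by rw [card_w_partOf, card_w_partOf, hx, hk])
  rw [atomWord_eq_rankMatch, atomWord_eq_rankMatch, hw, hx, hk]

lemma two_le_card_partOf_of_atomWord_ne {x y : VPart n s} (h : x ≤ y) {k : Fin n} {i : Fin s}
    (hne : x.atomWord i k ≠ y.atomWord i k) : 2 ≤ #(y.partOf k) := by
  by_contra! hcard
  refine hne (atomWord_eq_of_le_of_partOf_eq_singleton h ?_ i)
  exact eq_singleton_iff_unique_mem.mpr ⟨y.mem_partOf k, fun t ht =>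
    card_le_one.mp (by omega) t ht k (y.mem_partOf k)⟩

lemma singleton_mem_bot_parts (t : Fin n) :
    {t} ∈ (⊥ : Finpartition (univ : Finset (Fin n))).parts :=
  Finpartition.mem_bot_iff.mpr ⟨t, mem_univ t, rfl⟩

noncomputable def toAtom (y : VPart n s) : VPart n s where
  P := ⊥
  w i B := if B ∈ (⊥ : Finpartition (univ : Finset (Fin n))).parts then B.image (y.atomWord i)
    else ∅
  card_w i B hB := by
    obtain ⟨t, -, rfl⟩ := Finpartition.mem_bot_iff.mp hB
    rw [if_pos hB, image_singleton, card_singleton, card_singleton]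
  part_w i a := by
    obtain ⟨t, rfl⟩ := Finite.injective_iff_surjective.mp (y.atomWord_injective i) a
    have ht := singleton_mem_bot_parts t
    refine ⟨{t}, ⟨ht, by simp⟩, ?_⟩
    rintro B ⟨hB, haB⟩
    obtain ⟨t', -, rfl⟩ := Finpartition.mem_bot_iff.mp hB
    rw [if_pos hB, image_singleton, mem_singleton] at haB
    rw [y.atomWord_injective i haB]
  w_junk i B hB := if_neg hB

lemma toAtom_w_singleton (y : VPart n s) (i : Fin s) (t : Fin n) :
    y.toAtom.w i {t} = {y.atomWord i t} := by
  simp [toAtom]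

lemma toAtom_le (y : VPart n s) : y.toAtom ≤ y := by
  refine ⟨bot_le, fun i B hB B' hB' hBB' => ?_⟩
  obtain ⟨t, -, rfl⟩ := Finpartition.mem_bot_iff.mp hB
  rw [toAtom_w_singleton, singleton_subset_iff,
    ← y.partOf_eq_of_mem hB' (singleton_subset_iff.mp hBB')]
  exact y.atomWord_mem i t

lemma partOf_eq_singleton_of_isMin {y : VPart n s} (hy : IsMin y) (t : Fin n) :
    y.partOf t = {t} := by
  rw [← hy.eq_of_le y.toAtom_le]
  exact partOf_eq_of_mem _ (singleton_mem_bot_parts t) (mem_singleton_self t)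

lemma disjoint_w (X : VPart n s) (i : Fin s) {B B' : Finset (Fin n)} (hB : B ∈ X.P.parts)
    (hB' : B' ∈ X.P.parts) (hne : B ≠ B') : Disjoint (X.w i B) (X.w i B') :=
  disjoint_left.mpr fun {_} ha ha' => hne (X.eq_of_mem_w hB hB' ha ha')

/-- The old parts `B₁`, `B₂` get the junk value `∅` demanded by `w_junk`. -/
def mergeW (X : VPart n s) (B₁ B₂ : Finset (Fin n)) (i : Fin s) (C : Finset (Fin n)) :
    Finset (Fin n) :=
  if C = B₁ ∪ B₂ then X.w i B₁ ∪ X.w i B₂ else if C = B₁ ∨ C = B₂ then ∅ else X.w i C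

lemma mergeW_union (i : Fin s) : X.mergeW B₁ B₂ i (B₁ ∪ B₂) = X.w i B₁ ∪ X.w i B₂ := if_pos rfl

lemma mergeW_of_mem (h₁ : B₁ ∈ X.P.parts) (h₂ : B₂ ∈ X.P.parts) (hne : B₁ ≠ B₂) (i : Fin s)
    {C : Finset (Fin n)} (hC : C ∈ X.P.parts) (hC₁ : C ≠ B₁) (hC₂ : C ≠ B₂) :
    X.mergeW B₁ B₂ i C = X.w i C := by
  rw [mergeW, if_neg (ne_of_mem_of_not_mem hC (X.P.union_notMem_parts h₁ h₂ hne)),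
    if_neg (not_or.mpr ⟨hC₁, hC₂⟩)]

noncomputable def merge (X : VPart n s) (h₁ : B₁ ∈ X.P.parts) (h₂ : B₂ ∈ X.P.parts)
    (hne : B₁ ≠ B₂) : VPart n s where
  P := X.P.mergeParts h₁ h₂
  w := X.mergeW B₁ B₂
  card_w i C hC := by
    rcases (Finpartition.mem_mergeParts h₁ h₂).mp hC with rfl | ⟨hC, hC₁, hC₂⟩
    · have hdisj : Disjoint B₁ B₂ := X.P.disjoint h₁ h₂ hne
      rw [mergeW_union, card_union_of_disjoint (X.disjoint_w i h₁ h₂ hne),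
        card_union_of_disjoint hdisj, X.card_w i _ h₁, X.card_w i _ h₂]
    · rw [mergeW_of_mem h₁ h₂ hne i hC hC₁ hC₂, X.card_w i _ hC]
  part_w i a := by
    obtain ⟨C, ⟨hC, haC⟩, huniq⟩ := X.part_w i a
    by_cases hC₁₂ : C = B₁ ∨ C = B₂
    · refine ⟨B₁ ∪ B₂, ⟨(Finpartition.mem_mergeParts h₁ h₂).mpr (Or.inl rfl), ?_⟩, ?_⟩
      · rw [mergeW_union]
        rcases hC₁₂ with rfl | rfl
        exacts [mem_union_left _ haC, mem_union_right _ haC]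
      · rintro D ⟨hD, haD⟩
        rcases (Finpartition.mem_mergeParts h₁ h₂).mp hD with rfl | ⟨hDX, hD₁, hD₂⟩
        · rfl
        · rw [mergeW_of_mem h₁ h₂ hne i hDX hD₁ hD₂] at haD
          have hDC := huniq D ⟨hDX, haD⟩
          rcases hC₁₂ with rfl | rfl
          exacts [absurd hDC hD₁, absurd hDC hD₂]
    · push Not at hC₁₂
      refine ⟨C, ⟨(Finpartition.mem_mergeParts h₁ h₂).mpr (Or.inr ⟨hC, hC₁₂⟩), ?_⟩, ?_⟩
      · rwa [mergeW_of_mem h₁ h₂ hne i hC hC₁₂.1 hC₁₂.2]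
      · rintro D ⟨hD, haD⟩
        rcases (Finpartition.mem_mergeParts h₁ h₂).mp hD with rfl | ⟨hDX, hD₁, hD₂⟩
        · rcases mem_union.mp ((mergeW_union i).symm ▸ haD) with h | h
          exacts [absurd (huniq _ ⟨h₁, h⟩).symm hC₁₂.1, absurd (huniq _ ⟨h₂, h⟩).symm hC₁₂.2]
        · rw [mergeW_of_mem h₁ h₂ hne i hDX hD₁ hD₂] at haD
          exact huniq D ⟨hDX, haD⟩
  w_junk i C hC := by
    rw [Finpartition.mem_mergeParts] at hC
    unfold mergeW
    split_ifs with hU h₁₂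
    · exact absurd (Or.inl hU) hC
    · rfl
    · exact X.w_junk i C fun hCX => hC (Or.inr ⟨hCX, not_or.mp h₁₂⟩)

lemma merge_w (h₁ : B₁ ∈ X.P.parts) (h₂ : B₂ ∈ X.P.parts) (hne : B₁ ≠ B₂) :
    (X.merge h₁ h₂ hne).w = X.mergeW B₁ B₂ := rfl

lemma partOf_merge_of_mem (h₁ : B₁ ∈ X.P.parts) (h₂ : B₂ ∈ X.P.parts) (hne : B₁ ≠ B₂)
    {t : Fin n} (ht : t ∈ B₁ ∪ B₂) : (X.merge h₁ h₂ hne).partOf t = B₁ ∪ B₂ :=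
  X.P.part_mergeParts_of_mem h₁ h₂ ht

lemma atomWord_merge_of_notMem (h₁ : B₁ ∈ X.P.parts) (h₂ : B₂ ∈ X.P.parts) (hne : B₁ ≠ B₂)
    {t : Fin n} (ht : t ∉ B₁ ∪ B₂) (i : Fin s) :
    (X.merge h₁ h₂ hne).atomWord i t = X.atomWord i t := by
  have hpart : (X.merge h₁ h₂ hne).partOf t = X.partOf t :=
    X.P.part_mergeParts_of_notMem h₁ h₂ (mem_univ t) ht
  have hne₁ : X.partOf t ≠ B₁ := fun h => ht (mem_union_left _ (h ▸ X.mem_partOf t))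
  have hne₂ : X.partOf t ≠ B₂ := fun h => ht (mem_union_right _ (h ▸ X.mem_partOf t))
  rw [atomWord_eq_rankMatch, atomWord_eq_rankMatch, hpart, merge_w,
    mergeW_of_mem h₁ h₂ hne i (X.partOf_mem t) hne₁ hne₂]

lemma lt_merge (h₁ : B₁ ∈ X.P.parts) (h₂ : B₂ ∈ X.P.parts) (hne : B₁ ≠ B₂) :
    X < X.merge h₁ h₂ hne := by
  refine lt_of_le_of_ne ⟨X.P.le_mergeParts h₁ h₂, fun i B hB B' hB' hBB' => ?_⟩ fun h => ?_
  · rcases (Finpartition.mem_mergeParts h₁ h₂).mp hB' with rfl | ⟨hB'X, hB'₁, hB'₂⟩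
    · rw [merge_w, mergeW_union]
      obtain ⟨a, ha⟩ := X.P.nonempty_of_mem_parts hB
      rcases mem_union.mp (hBB' ha) with h | h
      · rw [X.P.eq_of_mem_parts hB h₁ ha h]; exact subset_union_left
      · rw [X.P.eq_of_mem_parts hB h₂ ha h]; exact subset_union_right
    · rw [X.P.eq_of_subset_of_mem_parts hB hB'X hBB', merge_w,
        mergeW_of_mem h₁ h₂ hne i hB'X hB'₁ hB'₂]
  · have hU : B₁ ∪ B₂ ∈ (X.merge h₁ h₂ hne).P.parts :=
      (Finpartition.mem_mergeParts h₁ h₂).mpr (Or.inl rfl)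
    exact X.P.union_notMem_parts h₁ h₂ hne (h ▸ hU)

lemma merge_le (h₁ : B₁ ∈ X.P.parts) (h₂ : B₂ ∈ X.P.parts) (hne : B₁ ≠ B₂) (hXY : X ≤ Y)
    {C : Finset (Fin n)} (hC : C ∈ Y.P.parts) (h₁C : B₁ ⊆ C) (h₂C : B₂ ⊆ C) :
    X.merge h₁ h₂ hne ≤ Y := by
  refine ⟨fun D hD => ?_, fun i D hD D' hD' hDD' => ?_⟩
  · rcases (Finpartition.mem_mergeParts h₁ h₂).mp hD with rfl | ⟨hDX, -, -⟩
    exacts [⟨C, hC, union_subset h₁C h₂C⟩, hXY.1 hDX]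
  · rcases (Finpartition.mem_mergeParts h₁ h₂).mp hD with rfl | ⟨hDX, hD₁, hD₂⟩
    · obtain ⟨a, ha⟩ := X.P.nonempty_of_mem_parts h₁
      rw [Y.P.eq_of_mem_parts hD' hC (hDD' (mem_union_left _ ha)) (h₁C ha), merge_w, mergeW_union]
      exact union_subset (hXY.2 i _ h₁ C hC h₁C) (hXY.2 i _ h₂ C hC h₂C)
    · rw [merge_w, mergeW_of_mem h₁ h₂ hne i hDX hD₁ hD₂]
      exact hXY.2 i D hDX D' hD' hDD'

lemma atomWord_merge_singleton {m : Fin n} {B : Finset (Fin n)} (h₁ : {m} ∈ X.P.parts)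
    (h₂ : B ∈ X.P.parts) (hne : {m} ≠ B) (i : Fin s)
    (hm : (X.merge h₁ h₂ hne).atomWord i m = X.atomWord i m) :
    (X.merge h₁ h₂ hne).atomWord i = X.atomWord i := by
  have hXm : X.partOf m = {m} := X.partOf_eq_of_mem h₁ (mem_singleton_self m)
  have hwm : X.w i {m} = {X.atomWord i m} := by
    obtain ⟨a, ha⟩ := card_eq_one.mp ((X.card_w i _ h₁).trans (card_singleton m))
    have := X.atomWord_mem i m
    rw [hXm, ha, mem_singleton] at this
    rw [ha, this]
  have hmB : m ∉ B := fun h => hne (X.P.eq_of_mem_parts h₁ h₂ (mem_singleton_self m) h)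
  have haB : X.atomWord i m ∉ X.w i B := fun h =>
    disjoint_left.mp (X.disjoint_w i h₁ h₂ hne) (hwm ▸ mem_singleton_self _) h
  have hU : {m} ∪ B = insert m B := (insert_eq m B).symm
  have hwU : (X.merge h₁ h₂ hne).w i ({m} ∪ B) = insert (X.atomWord i m) (X.w i B) := by
    rw [merge_w, mergeW_union, hwm, insert_eq]
  funext t
  by_cases ht : t ∈ {m} ∪ B
  · rcases mem_union.mp ht with htm | htB
    · rw [mem_singleton.mp htm, hm]
    · rw [atomWord_eq_rankMatch _ i t, partOf_merge_of_mem h₁ h₂ hne ht, hwU, hU,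
        atomWord_eq_rankMatch X i t, X.partOf_eq_of_mem h₂ htB]
      refine eqOn_rankMatch_insert hmB haB (X.card_w i B h₂) ?_ htB
      rw [← hwU, ← hU, ← partOf_merge_of_mem h₁ h₂ hne (mem_union_left _ (mem_singleton_self m))]
      exact hm
  · exact atomWord_merge_of_notMem h₁ h₂ hne ht i

lemma partOf_eq_singleton_of_covBy {Z Z' : VPart n s} (hcov : Z ⋖ Z')
    (hne : Z.atomWord ≠ Z'.atomWord) {m : Fin n} (hZ : Z.partOf m = {m})
    (hm : ∀ i, Z.atomWord i m = Z'.atomWord i m) : Z'.partOf m = {m} := by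
  by_contra hC
  obtain ⟨t, htC, htm⟩ : ∃ t ∈ Z'.partOf m, t ≠ m := by
    by_contra! h
    exact hC (eq_singleton_iff_unique_mem.mpr ⟨Z'.mem_partOf m, h⟩)
  have h₁ : {m} ∈ Z.P.parts := hZ ▸ Z.partOf_mem m
  have hne₁₂ : {m} ≠ Z.partOf t := fun h => htm (mem_singleton.mp (h ▸ Z.mem_partOf t))
  have hsub : Z.partOf t ⊆ Z'.partOf m := by
    rw [← Z'.partOf_eq_of_mem (Z'.partOf_mem m) htC]
    exact partOf_subset_of_le hcov.le t
  have hmerge : Z.merge h₁ (Z.partOf_mem t) hne₁₂ = Z' :=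
    (hcov.eq_or_eq (lt_merge _ _ _).le (merge_le _ _ _ hcov.le (Z'.partOf_mem m)
      (singleton_subset_iff.mpr (Z'.mem_partOf m)) hsub)).resolve_left (lt_merge _ _ _).ne'
  refine hne (funext fun i => ?_)
  rw [← hmerge] at hm ⊢
  exact (atomWord_merge_singleton h₁ (Z.partOf_mem t) hne₁₂ i (hm i).symm).symm

lemma lam_bot_coe (y : VPart n s) : lam ⊥ (y : WithBot (VPart n s)) =
    mkLbl ((n : ℤ) - 1) (s + atomIndex y) 0 := rfl

lemma lam_coe_coe (x y : VPart n s) : lam (x : WithBot (VPart n s)) (y : WithBot (VPart n s)) =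
    if atomWord x = atomWord y then mkLbl n (mergeMax x y) 0 else firstDiff x y := rfl

open scoped Classical in
lemma firstDiff_of_ne {x y : VPart n s} (h : x.atomWord ≠ y.atomWord) :
    ∃ (K : Fin n) (I : Fin s),
      firstDiff x y = mkLbl ((K : ℕ) + 1) ((I : ℕ) + 1) ((atomWord y I K : ℕ) + 1) ∧
      (∀ i t, t < K → x.atomWord i t = y.atomWord i t) ∧ ∃ i, x.atomWord i K ≠ y.atomWord i K := by
  have hD : (univ.filter fun p : Fin n × Fin s =>
      x.atomWord p.2 p.1 ≠ y.atomWord p.2 p.1).Nonempty := by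
    obtain ⟨i, hi⟩ := Function.ne_iff.mp h
    obtain ⟨t, ht⟩ := Function.ne_iff.mp hi
    exact ⟨(t, i), mem_filter.mpr ⟨mem_univ _, ht⟩⟩
  rw [firstDiff, dif_pos hD]
  refine ⟨_, _, rfl, fun i t ht => ?_, ?_⟩
  · by_contra hne
    exact (min'_le _ t (mem_image.mpr ⟨(t, i), mem_filter.mpr ⟨mem_univ _, hne⟩, rfl⟩)).not_gt ht
  · obtain ⟨p, hp, hpK⟩ := mem_image.mp (min'_mem _ (hD.image Prod.fst))
    exact ⟨p.2, hpK ▸ (mem_filter.mp hp).2⟩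

structure IsDecreasingChain (c : Fin (n + 1) → WithBot (VPart n s)) : Prop where
  zero : c 0 = ⊥
  covBy : ∀ e : Fin n, c e.castSucc ⋖ c e.succ
  antitone : Antitone fun e : Fin n => lam (c e.castSucc) (c e.succ)

namespace IsDecreasingChain

variable {c : Fin (n + 1) → WithBot (VPart n s)}

lemma atomWord_ne (hc : IsDecreasingChain c) {E : Fin n} {Z Z' : VPart n s}
    (hZ : c E.castSucc = Z) (hZ' : c E.succ = Z') : Z.atomWord ≠ Z'.atomWord := by
  intro hw
  let E₀ : Fin n := ⟨0, E.pos⟩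
  have hE₀ : c E₀.castSucc = ⊥ := by rw [show E₀.castSucc = 0 from Fin.ext rfl, hc.zero]
  obtain ⟨Y₁, hY₁⟩ := WithBot.ne_bot_iff_exists.mp (hE₀ ▸ hc.covBy E₀).lt.ne_bot
  have hle := hc.antitone (show E₀ ≤ E from Fin.le_def.mpr (Nat.zero_le _))
  simp only at hle
  rw [hE₀, ← hY₁, lam_bot_coe, hZ, hZ', lam_coe_coe, if_pos hw] at hle
  have := le_of_mkLbl_le hle
  omega

lemma atomWord_eq_of_le (hc : IsDecreasingChain c) {e : Fin n} {k i j : ℤ}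
    (hlam : lam (c e.castSucc) (c e.succ) = mkLbl k i j) {E : Fin n} (hE : E ≤ e)
    {Z Z' : VPart n s} (hZ : c E.castSucc = Z) (hZ' : c E.succ = Z') {t : Fin n}
    (ht : (t : ℤ) + 1 < k) (i' : Fin s) : Z.atomWord i' t = Z'.atomWord i' t := by
  have hne := hc.atomWord_ne hZ hZ'
  obtain ⟨K, I, hfd, hagree, -⟩ := firstDiff_of_ne hne
  have hle := hc.antitone hE
  simp only at hle
  rw [hlam, hZ, hZ', lam_coe_coe, if_neg hne, hfd] at hle
  have := le_of_mkLbl_le hle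
  exact hagree i' t (Fin.lt_def.mpr (by omega))

lemma partOf_eq_singleton (hc : IsDecreasingChain c) {e : Fin n} {k i j : ℤ}
    (hlam : lam (c e.castSucc) (c e.succ) = mkLbl k i j) {m : Fin n} (hm : (m : ℤ) + 1 < k) :
    ∀ p ≤ e.succ, ∀ Z : VPart n s, c p = Z → Z.partOf m = {m} := by
  intro p
  induction p using Fin.induction with
  | zero => exact fun _ Z hZ => absurd (hc.zero.symm.trans hZ) WithBot.bot_ne_coe
  | succ E ih =>
    intro hE Z hZ
    have hcov := hc.covBy E
    rw [hZ] at hcov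
    rcases eq_or_ne (c E.castSucc) ⊥ with hbot | hW
    · rw [hbot] at hcov
      exact partOf_eq_singleton_of_isMin (WithBot.bot_covBy_coe.mp hcov) m
    · obtain ⟨W, hW⟩ := WithBot.ne_bot_iff_exists.mp hW
      rw [← hW] at hcov
      exact partOf_eq_singleton_of_covBy (WithBot.coe_covBy_coe.mp hcov)
        (hc.atomWord_ne hW.symm hZ) (ih (Fin.castSucc_lt_succ.le.trans hE) W hW.symm)
        (hc.atomWord_eq_of_le hlam (Fin.succ_le_succ_iff.mp hE) hW.symm hZ hm)

end IsDecreasingChain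

end VPart

open VPart in
theorem statement13_general (n s : ℕ) (c : Fin (n + 1) -> WithBot (VPart n s))
    (h0 : c 0 = ⊥)
    (hcov : ∀ e : Fin n, c e.castSucc ⋖ c e.succ)
    (hdec : Antitone fun e : Fin n => lam (c e.castSucc) (c e.succ))
    (e : Fin n) (X Y : VPart n s)
    (hX : c e.castSucc = X) (hY : c e.succ = Y)
    (k i j : ℤ) (hlam : lam (c e.castSucc) (c e.succ) = mkLbl k i j) :
    (∀ m : Fin n, (m : ℤ) + 1 < k -> {m} ∈ Y.P.parts) ∧
    ∀ K : Fin n, (K : ℤ) + 1 = k -> ∃ B ∈ Y.P.parts, K ∈ B ∧ 2 ≤ B.card := by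
  have hc : IsDecreasingChain c := ⟨h0, hcov, hdec⟩
  refine ⟨fun m hm => ?_, fun K hK => ?_⟩
  · rw [← hc.partOf_eq_singleton hlam hm e.succ le_rfl Y hY]
    exact Y.partOf_mem m
  · have hXY : X ⋖ Y := WithBot.coe_covBy_coe.mp (hX ▸ hY ▸ hcov e)
    have hne := hc.atomWord_ne hX hY
    obtain ⟨K', I, hfd, -, i', hi'⟩ := firstDiff_of_ne hne
    rw [hX, hY, lam_coe_coe, if_neg hne, hfd, mkLbl_inj] at hlam
    obtain rfl : K = K' := Fin.ext (by omega)
    exact ⟨Y.partOf K, Y.partOf_mem K, Y.mem_partOf K,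
      two_le_card_partOf_of_atomWord_ne hXY.le hi'⟩

open VPart in
/-- if `x ⋖ y` is an edge of a decreasing maximal chain with label
`(k, i, j)` and `k ≤ n - 1`, then in the underlying partition of `y` every element of
`[k-1]` is a singleton part and the part containing `k` is not a singleton. -/
theorem statement13 (n s : ℕ) (c : Fin (n + 1) -> WithBot (VPart n s))
    (h0 : c 0 = ⊥) (htop : IsTop (c (Fin.last n)))
    (hcov : ∀ e : Fin n, c e.castSucc ⋖ c e.succ)
    (hdec : Antitone fun e : Fin n => lam (c e.castSucc) (c e.succ))
    (e : Fin n) (X Y : VPart n s)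
    (hX : c e.castSucc = X) (hY : c e.succ = Y)
    (k i j : ℤ) (hlam : lam (c e.castSucc) (c e.succ) = mkLbl k i j)
    (hk : k ≤ (n : ℤ) - 1) :
    (∀ m : Fin n, (m : ℤ) + 1 < k -> {m} ∈ Y.P.parts) ∧
    ∀ K : Fin n, (K : ℤ) + 1 = k -> ∃ B ∈ Y.P.parts, K ∈ B ∧ 2 ≤ B.card :=
  statement13_general n s c h0 hcov hdec e X Y hX hY k i j hlam
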